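/- arXiv:1809.01259 — 4 statements merged into one kernel-verified Lean document; each statement's English description precedes it below -/
import Mathlib

section
/- For every graphon W, t_{M²}(W) ≥ t_{F_{5,3}}(W), where M := K_{5,5} \ C_{10} and M² is the blow-up of M with p = 2 relative to one side of its bipartition. -/
open MeasureTheory

/-- The unit box `[0,1]^ι`. -/
def unitBox (ι : Type*) : Set (ι → ℝ) := Set.univ.pi fun _ => Set.Icc (0 : ℝ) 1

/-- The homomorphism density of a bipartite graph, given by its parts `A`, `B` and
its edge set `E ⊆ A × B`, in a graphon `W`. -/
noncomputable def bipDensity {A B : Type*} [Fintype A] [Fintype B]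
    (E : Finset (A × B)) (W : ℝ → ℝ → ℝ) : ℝ :=
  ∫ x in unitBox A, ∫ y in unitBox B, ∏ e ∈ E, W (x e.1) (y e.2)

/-- The blow-up `H_A^p` of a bipartite graph relative to the side `A`. -/
def blowUp {A B : Type*} [Fintype A] [Fintype B] [DecidableEq A] [DecidableEq B]
    (E : Finset (A × B)) (p : ℕ) : Finset (A × (B × Fin p)) :=
  Finset.univ.filter fun q => (q.1, q.2.1) ∈ E

/-- The edge set of `M = K_{5,5} \ C_{10}`: the bipartite graph on `Z ∪ Z'`, two copies
of `ℤ₅`, where `i ∈ Z'` is adjacent to `i - 1, i, i + 1 ∈ Z`. -/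
def edgesM : Finset (ZMod 5 × ZMod 5) :=
  Finset.univ.filter fun p => p.1 = p.2 - 1 ∨ p.1 = p.2 ∨ p.1 = p.2 + 1

/-- The edge set of the `(5,3)`-incidence graph `F_{5,3}`, the bipartite graph on
`[5] ∪ {F ⊆ [5] : |F| = 3}` where `i` is adjacent to `F` iff `i ∈ F`. -/
def edgesF53 : Finset (Fin 5 × {F : Finset (Fin 5) // F.card = 3}) :=
  Finset.univ.filter fun p => p.1 ∈ p.2.1

/-! Put `d(x; S) = ∫₀¹ ∏_{a ∈ S} W(x_a, t) dt` (the codegree) and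
`P(x) = ∏_{i ∈ ℤ₅} d(x; {i-1, i, i+1})`. Integrating out the side `Z'` of `M²` gives `t_{M²}(W) = ∫ P²`, each vertex of `Z'`
appearing twice. The ten 3-subsets of `ℤ₅` are the five consecutive triples and their
images under doubling (the triples consecutive in the order 0, 2, 4, 1, 3), so integrating
out the triples of `F_{5,3}` gives `t_{F_{5,3}}(W) = ∫ P(x) P(x ∘ 2·)`. As `x ↦ x ∘ 2·`
preserves the measure on `[0,1]^ℤ₅`, AM–GM gives
`∫ P(x) P(x ∘ 2·) ≤ (∫ P² + ∫ P(x ∘ 2·)²) / 2 = ∫ P²`. -/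

open Set Finset

section UnitBox
variable {ι κ : Type*}

lemma coe_piCongrLeft_const (e : ι ≃ κ) :
    ⇑(MeasurableEquiv.piCongrLeft (fun _ => ℝ) e) = fun x => x ∘ e.symm := by
  funext x k
  simp [MeasurableEquiv.coe_piCongrLeft, Equiv.piCongrLeft_apply]

variable [Fintype ι] [Fintype κ]

lemma volume_restrict_unitBox :
    (volume : Measure (ι → ℝ)).restrict (unitBox ι) =
      Measure.pi fun _ => volume.restrict (Icc (0 : ℝ) 1) := by
  rw [volume_pi]
  exact Measure.restrict_pi_pi _ _

instance : IsProbabilityMeasure ((volume : Measure (ι → ℝ)).restrict (unitBox ι)) := by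
  rw [volume_restrict_unitBox]
  have : IsProbabilityMeasure (volume.restrict (Icc (0 : ℝ) 1)) := ⟨by simp⟩
  infer_instance

lemma setIntegral_unitBox_prod (G : κ → ℝ → ℝ) :
    ∫ y in unitBox κ, ∏ b, G b (y b) = ∏ b, ∫ t in Icc (0 : ℝ) 1, G b t := by
  rw [volume_restrict_unitBox, integral_fintype_prod_eq_prod]

lemma measurePreserving_comp_unitBox (e : ι ≃ κ) :
    MeasurePreserving (MeasurableEquiv.piCongrLeft (fun _ => ℝ) e)
      (volume.restrict (unitBox ι)) (volume.restrict (unitBox κ)) := by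
  simpa only [volume_restrict_unitBox] using
    measurePreserving_piCongrLeft (fun _ => volume.restrict (Icc (0 : ℝ) 1)) e

lemma setIntegral_unitBox_comp_equiv (e : ι ≃ κ) (G : (κ → ℝ) → ℝ) :
    ∫ x in unitBox ι, G (x ∘ e.symm) = ∫ y in unitBox κ, G y := by
  simpa only [coe_piCongrLeft_const] using (measurePreserving_comp_unitBox e).integral_comp' G

end UnitBox

lemma integral_mul_comp_le_integral_sq {α : Type*} [MeasurableSpace α] {μ : Measure α}
    {f : α → ℝ} (hf : MemLp f 2 μ) {T : α ≃ᵐ α} (hT : MeasurePreserving T μ μ) :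
    ∫ x, f x * f (T x) ∂μ ≤ ∫ x, f x ^ 2 ∂μ := by
  have hfT : MemLp (fun x => f (T x)) 2 μ := hf.comp_measurePreserving hT
  have hsq : ∫ x, f (T x) ^ 2 ∂μ = ∫ x, f x ^ 2 ∂μ :=
    hT.integral_comp' fun y => f y ^ 2
  calc ∫ x, f x * f (T x) ∂μ ≤ ∫ x, (f x ^ 2 + f (T x) ^ 2) / 2 ∂μ :=
        integral_mono (hf.integrable_mul hfT)
          ((hf.integrable_sq.add hfT.integrable_sq).div_const 2)
          fun x => by nlinarith [sq_nonneg (f x - f (T x))]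
    _ = ∫ x, f x ^ 2 ∂μ := by
        rw [integral_div, integral_add hf.integrable_sq hfT.integrable_sq, hsq]
        ring

noncomputable def codegree (W : ℝ → ℝ → ℝ) {ι : Type*} (x : ι → ℝ) (S : Finset ι) : ℝ :=
  ∫ t in Icc (0 : ℝ) 1, ∏ a ∈ S, W (x a) t

section Codegree
variable {W : ℝ → ℝ → ℝ} {ι : Type*}

lemma codegree_map {κ : Type*} (x : κ → ℝ) (e : ι ↪ κ) (S : Finset ι) :
    codegree W x (S.map e) = codegree W (x ∘ e) S := by
  simp only [codegree, prod_map, Function.comp_apply]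

lemma codegree_mem_Icc (hW : ∀ x y, W x y ∈ Icc (0 : ℝ) 1) (x : ι → ℝ) (S : Finset ι) :
    codegree W x S ∈ Icc (0 : ℝ) 1 := by
  have hprod : ∀ t, ∏ a ∈ S, W (x a) t ∈ unitInterval := fun t =>
    unitInterval.prod_mem fun a _ => hW _ _
  refine ⟨setIntegral_nonneg measurableSet_Icc fun t _ => (hprod t).1, ?_⟩
  have h : ‖codegree W x S‖ ≤ 1 * volume.real (Icc (0 : ℝ) 1) :=
    norm_setIntegral_le_of_norm_le_const (by simp) fun t _ =>
      (Real.norm_of_nonneg (hprod t).1).trans_le (hprod t).2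
  simpa using (le_abs_self _).trans h

lemma measurable_codegree (hW : Measurable (Function.uncurry W)) (S : Finset ι) :
    Measurable fun x : ι → ℝ => codegree W x S := by
  have h : StronglyMeasurable fun p : (ι → ℝ) × ℝ => ∏ a ∈ S, W (p.1 a) p.2 :=
    (Finset.measurable_prod S fun a _ =>
      hW.comp ((measurable_pi_apply a).comp measurable_fst |>.prodMk measurable_snd))
      |>.stronglyMeasurable
  exact h.integral_prod_right'.measurable

end Codegree

section Bipartite
variable {A B : Type*} [Fintype A] [Fintype B] [DecidableEq A] [DecidableEq B]

def nbhd (E : Finset (A × B)) (b : B) : Finset A := {a | (a, b) ∈ E}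

lemma prod_edges_eq_prod_nbhd {M : Type*} [CommMonoid M] (E : Finset (A × B)) (f : A → B → M) :
    ∏ e ∈ E, f e.1 e.2 = ∏ b, ∏ a ∈ nbhd E b, f a b := by
  conv_lhs => rw [← filter_univ_mem E, prod_filter, Fintype.prod_prod_type, prod_comm]
  simp only [nbhd, prod_filter]

lemma bipDensity_eq_integral_prod_codegree (E : Finset (A × B)) (W : ℝ → ℝ → ℝ) :
    bipDensity E W = ∫ x in unitBox A, ∏ b, codegree W x (nbhd E b) := by
  refine congrArg (integral _) (funext fun x => ?_)
  calc ∫ y in unitBox B, ∏ e ∈ E, W (x e.1) (y e.2)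
      = ∫ y in unitBox B, ∏ b, ∏ a ∈ nbhd E b, W (x a) (y b) :=
        congrArg (integral _) (funext fun y => prod_edges_eq_prod_nbhd E fun a b => W (x a) (y b))
    _ = ∏ b, codegree W x (nbhd E b) :=
        setIntegral_unitBox_prod fun b t => ∏ a ∈ nbhd E b, W (x a) t

lemma nbhd_blowUp (E : Finset (A × B)) (p : ℕ) (b : B × Fin p) :
    nbhd (blowUp E p) b = nbhd E b.1 := by
  ext a
  simp [nbhd, blowUp]

lemma bipDensity_blowUp (E : Finset (A × B)) (p : ℕ) (W : ℝ → ℝ → ℝ) :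
    bipDensity (blowUp E p) W = ∫ x in unitBox A, (∏ b, codegree W x (nbhd E b)) ^ p := by
  simp only [bipDensity_eq_integral_prod_codegree, nbhd_blowUp, Fintype.prod_prod_type,
    prod_const, card_univ, Fintype.card_fin, Finset.prod_pow]

end Bipartite

def consecutiveTriple (i : ZMod 5) : Finset (ZMod 5) := {i - 1, i, i + 1}

def doubling : Equiv.Perm (ZMod 5) := ⟨(2 * ·), (3 * ·), by decide, by decide⟩

lemma nbhd_edgesM (i : ZMod 5) : nbhd edgesM i = consecutiveTriple i := by
  revert i
  decide

lemma nbhd_edgesF53 (F : {F : Finset (Fin 5) // F.card = 3}) : nbhd edgesF53 F = F.1 := by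
  ext
  simp [nbhd, edgesF53]

lemma triples_eq_consecutive_add_doubled :
    univ.val.map (fun F : {F : Finset (Fin 5) // F.card = 3} => F.1) =
      univ.val.map (fun i => (consecutiveTriple i).map (ZMod.finEquiv 5).symm.toEmbedding) +
      univ.val.map (fun i => (consecutiveTriple i).map
        (doubling.trans (ZMod.finEquiv 5).symm.toEquiv).toEmbedding) := by
  decide

lemma prod_triples {M : Type*} [CommMonoid M] (g : Finset (Fin 5) → M) :
    ∏ F : {F : Finset (Fin 5) // F.card = 3}, g F.1 =
      (∏ i, g ((consecutiveTriple i).map (ZMod.finEquiv 5).symm.toEmbedding)) *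
      ∏ i, g ((consecutiveTriple i).map
        (doubling.trans (ZMod.finEquiv 5).symm.toEquiv).toEmbedding) := by
  simpa only [prod_eq_multiset_prod, Multiset.map_map, Multiset.map_add, Multiset.prod_add,
      Function.comp_def]
    using congrArg (fun s => (s.map g).prod) triples_eq_consecutive_add_doubled

theorem mobius_squared_ge_incidence_general
    (W : ℝ → ℝ → ℝ) (hWmeas : Measurable (Function.uncurry W))
    (hWmem : ∀ x y, W x y ∈ Set.Icc (0 : ℝ) 1) :
    bipDensity (blowUp edgesM 2) W ≥ bipDensity edgesF53 W := by
  set P : (ZMod 5 → ℝ) → ℝ := fun x => ∏ i, codegree W x (consecutiveTriple i) with hP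
  have hL : bipDensity (blowUp edgesM 2) W = ∫ x in unitBox (ZMod 5), P x ^ 2 := by
    simp only [bipDensity_blowUp, nbhd_edgesM, hP]
  have hR : bipDensity edgesF53 W = ∫ x in unitBox (ZMod 5), P x * P (x ∘ doubling) := by
    rw [bipDensity_eq_integral_prod_codegree,
      ← setIntegral_unitBox_comp_equiv (ZMod.finEquiv 5).symm.toEquiv]
    simp [nbhd_edgesF53, prod_triples, codegree_map, hP, Function.comp_def]
  have hPmeas : Measurable P := Finset.measurable_prod _ fun i _ => measurable_codegree hWmeas _
  have hPmem : MemLp P 2 (volume.restrict (unitBox (ZMod 5))) :=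
    MemLp.of_bound hPmeas.aestronglyMeasurable 1 (ae_of_all _ fun x => by
      have hx : P x ∈ unitInterval := unitInterval.prod_mem fun i _ => codegree_mem_Icc hWmem x _
      simpa [abs_of_nonneg hx.1] using hx.2)
  rw [ge_iff_le, hL, hR]
  simpa [coe_piCongrLeft_const] using
    integral_mul_comp_le_integral_sq hPmem (measurePreserving_comp_unitBox doubling.symm)

/-- for every graphon `W`, `t_{M²}(W) ≥ t_{F_{5,3}}(W)`, where
`M²` is the blow-up of `M = K_{5,5} \ C_{10}` with `p = 2` relative to one side. -/
theorem mobius_squared_ge_incidence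
    (W : ℝ → ℝ → ℝ) (hWmeas : Measurable (Function.uncurry W))
    (hWsymm : ∀ x y, W x y = W y x) (hWmem : ∀ x y, W x y ∈ Set.Icc (0 : ℝ) 1) :
    bipDensity (blowUp edgesM 2) W ≥ bipDensity edgesF53 W :=
  mobius_squared_ge_incidence_general W hWmeas hWmem
end

section
/- Let m ≥ 1 and let 𝓕 = {f_I : I ⊆ [m]} be a family of measurable functions f_I : [0,1]^I → [0,1]. For each I ⊆ [m] define f̃_I(x_I) := (∏_{φ∈S_m} f_{φ(I)}(x_I))^{1/m!}, where f_{φ(I)} is evaluated at x_I via the order-preserving bijection between I and φ(I). Then ∫_{[0,1]^m} ∏_{I⊆[m]} f̃_I(x_I) dx ≤ ∏_{φ∈S_m} (∫_{[0,1]^m} ∏_{I⊆[m]} f_{φ(I)}(x_I) dx)^{1/m!}. -/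
open MeasureTheory ENNReal

/-- `f_{φ(I)}` evaluated at `x_I`: the function `f_{φ(I)}` (with arguments indexed in
increasing order of `φ(I)`) applied to the coordinates of `x` indexed by `I`, via the
order-preserving bijection between `I` and `φ(I)`. -/
noncomputable def evalPerm {m : ℕ} (f : (I : Finset (Fin m)) → (Fin I.card → ℝ) → ℝ)
    (φ : Equiv.Perm (Fin m)) (I : Finset (Fin m)) (x : Fin m → ℝ) : ℝ :=
  f (I.image φ) fun j =>
    x (I.orderIsoOfFin rfl (Fin.cast (Finset.card_image_of_injective I φ.injective) j))

/-- the Hölder inequality for the symmetrised family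
`f̃_I(x_I) = (∏_{φ ∈ S_m} f_{φ(I)}(x_I))^{1/m!}`:
`∫ ∏_I f̃_I(x_I) dx ≤ ∏_{φ ∈ S_m} (∫ ∏_I f_{φ(I)}(x_I) dx)^{1/m!}`. -/
theorem holder_trick (m : ℕ) (hm : 1 ≤ m)
    (f : (I : Finset (Fin m)) → (Fin I.card → ℝ) → ℝ)
    (hmeas : ∀ I, Measurable (f I))
    (hmem : ∀ I z, f I z ∈ Set.Icc (0 : ℝ) 1) :
    (∫ x in unitBox (Fin m),
        ∏ I : Finset (Fin m),
          (∏ φ : Equiv.Perm (Fin m), evalPerm f φ I x) ^ ((m.factorial : ℝ)⁻¹)) ≤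
      ∏ φ : Equiv.Perm (Fin m),
        (∫ x in unitBox (Fin m),
            ∏ I : Finset (Fin m), evalPerm f φ I x) ^ ((m.factorial : ℝ)⁻¹) := by
  classical
  set p : ℝ := (m.factorial : ℝ)⁻¹ with hp
  have hfac : (0:ℝ) < m.factorial := by positivity
  have hp0 : 0 ≤ p := by positivity
  set μ := (volume : Measure (Fin m → ℝ)).restrict (unitBox (Fin m)) with hμ
  have hμuniv : μ Set.univ = 1 := by
    rw [hμ, Measure.restrict_apply_univ, unitBox, volume_pi_pi]
    simp
  -- basic facts about evalPerm
  have hev_meas : ∀ φ I, Measurable (evalPerm f φ I) := fun φ I =>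
    (hmeas _).comp (measurable_pi_lambda _ fun j => measurable_pi_apply _)
  have hev_mem : ∀ φ I x, evalPerm f φ I x ∈ Set.Icc (0:ℝ) 1 := fun φ I x => hmem _ _
  -- the product function g φ
  set g : Equiv.Perm (Fin m) → (Fin m → ℝ) → ℝ :=
      fun φ x => ∏ I : Finset (Fin m), evalPerm f φ I x with hg
  have hg_meas : ∀ φ, Measurable (g φ) := fun φ =>
    Finset.measurable_prod _ fun I _ => hev_meas φ I
  have hg0 : ∀ φ x, 0 ≤ g φ x := fun φ x =>
    Finset.prod_nonneg fun I _ => (hev_mem φ I x).1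
  have hg1 : ∀ φ x, g φ x ≤ 1 := fun φ x =>
    Finset.prod_le_one (fun I _ => (hev_mem φ I x).1) (fun I _ => (hev_mem φ I x).2)
  -- rewrite the integrand
  have hint : ∀ x, (∏ I : Finset (Fin m),
      (∏ φ : Equiv.Perm (Fin m), evalPerm f φ I x) ^ p) = ∏ φ, (g φ x) ^ p := by
    intro x
    calc (∏ I : Finset (Fin m), (∏ φ, evalPerm f φ I x) ^ p)
        = ∏ I : Finset (Fin m), ∏ φ, (evalPerm f φ I x) ^ p := by
          refine Finset.prod_congr rfl fun I _ => ?_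
          exact (Real.finset_prod_rpow _ _ (fun φ _ => (hev_mem φ I x).1) p).symm
      _ = ∏ φ, ∏ I : Finset (Fin m), (evalPerm f φ I x) ^ p := Finset.prod_comm
      _ = ∏ φ, (g φ x) ^ p := by
          refine Finset.prod_congr rfl fun φ _ => ?_
          exact Real.finset_prod_rpow _ _ (fun I _ => (hev_mem φ I x).1) p
  -- the lintegrals
  set L : Equiv.Perm (Fin m) → ℝ≥0∞ := fun φ => ∫⁻ x, ENNReal.ofReal (g φ x) ∂μ with hL
  have hL1 : ∀ φ, L φ ≤ 1 := by
    intro φ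
    calc L φ ≤ ∫⁻ _, 1 ∂μ := lintegral_mono fun x => by
          simpa using ENNReal.ofReal_le_one.2 (hg1 φ x)
      _ = 1 := by simp [hμuniv]
  have hInt : ∀ φ, ∫ x, g φ x ∂μ = (L φ).toReal := by
    intro φ
    rw [hL, integral_eq_lintegral_of_nonneg_ae (Filter.Eventually.of_forall (hg0 φ))
      (hg_meas φ).aestronglyMeasurable]
  -- Hölder
  have hpsum : ∑ _φ : Equiv.Perm (Fin m), p = 1 := by
    simp only [Finset.sum_const, Finset.card_univ, Fintype.card_perm, Fintype.card_fin,
      nsmul_eq_mul, hp]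
    exact mul_inv_cancel₀ hfac.ne'
  have hHolder : (∫⁻ x, ∏ φ, (ENNReal.ofReal (g φ x)) ^ p ∂μ) ≤ ∏ φ, (L φ) ^ p :=
    ENNReal.lintegral_prod_norm_pow_le _
      (fun φ _ => ((hg_meas φ).ennreal_ofReal).aemeasurable) hpsum (fun _ _ => hp0)
  -- put it together
  have hLHS : (∫ x, ∏ I : Finset (Fin m),
      (∏ φ : Equiv.Perm (Fin m), evalPerm f φ I x) ^ p ∂μ)
      = (∫⁻ x, ∏ φ, (ENNReal.ofReal (g φ x)) ^ p ∂μ).toReal := by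
    rw [integral_eq_lintegral_of_nonneg_ae]
    · congr 1
      refine lintegral_congr fun x => ?_
      rw [hint x, ENNReal.ofReal_prod_of_nonneg (fun φ _ => Real.rpow_nonneg (hg0 φ x) p)]
      exact Finset.prod_congr rfl fun φ _ =>
        (ENNReal.ofReal_rpow_of_nonneg (hg0 φ x) hp0).symm
    · exact Filter.Eventually.of_forall fun x =>
        Finset.prod_nonneg fun I _ => Real.rpow_nonneg
          (Finset.prod_nonneg fun φ _ => (hev_mem φ I x).1) p
    · exact Measurable.aestronglyMeasurable <| Finset.measurable_prod _ fun I _ =>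
        (Finset.measurable_prod _ fun φ _ => hev_meas φ I).pow_const _
  have hfin : (∏ φ, (L φ) ^ p) ≠ ⊤ := by
    refine (lt_of_le_of_lt ?_ ENNReal.one_lt_top).ne
    calc (∏ φ, (L φ) ^ p) ≤ ∏ _φ : Equiv.Perm (Fin m), 1 :=
          Finset.prod_le_prod' fun φ _ => ENNReal.rpow_le_one (hL1 φ) hp0
      _ = 1 := by simp
  calc (∫ x, ∏ I : Finset (Fin m),
        (∏ φ : Equiv.Perm (Fin m), evalPerm f φ I x) ^ p ∂μ)
      = (∫⁻ x, ∏ φ, (ENNReal.ofReal (g φ x)) ^ p ∂μ).toReal := hLHS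
    _ ≤ (∏ φ, (L φ) ^ p).toReal := ENNReal.toReal_mono hfin hHolder
    _ = ∏ φ, ((L φ).toReal) ^ p := by
        rw [ENNReal.toReal_prod]
        exact Finset.prod_congr rfl fun φ _ => (ENNReal.toReal_rpow _ _).symm
    _ = ∏ φ, (∫ x, g φ x ∂μ) ^ p := by
        exact Finset.prod_congr rfl fun φ _ => by rw [hInt φ]
end

section
/- Let m ≥ r ≥ 1 and let α = (α_k)_{k=1}^r be a symmetric integer weight vector such that C(m−k, r−k) divides α_k for each 1 ≤ k ≤ r, with all β_k := α_k / C(m−k, r−k) ≥ 1. Then, for every graphon W, t_{𝓖_α}(W_α) = t_J^β(W), where J is the (r,r)-downset graph and β = (β_k)_{k=1}^r. -/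
open MeasureTheory

/-- The vertex class `V_k` (for `1 ≤ k ≤ r`) of the hypergraph `𝓗_α`: one vertex for
each triple of an `r`-subset `F ⊆ [m]`, a `k`-subset of `F`, and a copy index in
`Fin (β_k)`. -/
abbrev PartVert (m r k : ℕ) : Type :=
  {q : Finset (Fin m) × Finset (Fin m) // q.1.card = r ∧ q.2 ⊆ q.1 ∧ q.2.card = k}

/-- The vertex set `V_1 ∪ ⋯ ∪ V_r` of `𝓗_α` (the part `V_0 = [m]` is kept separate). -/
abbrev HVert (m r : ℕ) (β : ℕ → ℕ) : Type :=
  Σ k : Fin r, PartVert m r ((k : ℕ) + 1) × Fin (β ((k : ℕ) + 1))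

/-- The edges of `𝓗_α`: a vertex `v₀ ∈ [m]`, an `r`-set `F`, a chain
`C_1 ⊆ ⋯ ⊆ C_r ⊆ F` with `|C_k| = k` and `v₀ ∈ C_k`, together with copy indices. -/
abbrev HEdge (m r : ℕ) (β : ℕ → ℕ) : Type :=
  {c : Fin m × Finset (Fin m) × (Fin r → Finset (Fin m)) //
      c.2.1.card = r ∧
      (∀ k : Fin r, (c.2.2 k).card = (k : ℕ) + 1 ∧ c.2.2 k ⊆ c.2.1) ∧
      (∀ k l : Fin r, k ≤ l → c.2.2 k ⊆ c.2.2 l) ∧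
      (∀ k : Fin r, c.1 ∈ c.2.2 k)} ×
    (∀ k : Fin r, Fin (β ((k : ℕ) + 1)))

/-- The vertex of `V_k` appearing in position `k` of an edge of `𝓗_α`. -/
def HEdge.vert {m r : ℕ} {β : ℕ → ℕ} (e : HEdge m r β) (k : Fin r) : HVert m r β :=
  ⟨k, ⟨⟨(e.1.1.2.1, e.1.1.2.2 k), e.1.2.1, (e.1.2.2.1 k).2, (e.1.2.2.1 k).1⟩, e.2 k⟩⟩

/-- Homomorphism density of the `(r+1)`-partite `(r+1)`-graph `𝓗_α` in a function
`U : [0,1]^{r+1} → [0,1]` (curried as `U(x, z_1, …, z_r)`). -/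
noncomputable def tHyp (m r : ℕ) (β : ℕ → ℕ) (U : ℝ → (Fin r → ℝ) → ℝ) : ℝ :=
  ∫ x in unitBox (Fin m), ∫ z in unitBox (HVert m r β),
    ∏ e : HEdge m r β, U (x e.1.1.1) fun k => z (e.vert k)

/-- The vertex set `U_1([r]) ∪ ⋯ ∪ U_r([r])` of `𝓖_α`. -/
abbrev GVert (r : ℕ) (β : ℕ → ℕ) : Type :=
  Σ k : Fin r, {s : Finset (Fin r) // s.card = (k : ℕ) + 1} × Fin (β ((k : ℕ) + 1))

/-- The edges of `𝓖_α`: the `[r]`-chains, i.e. a vertex `v₀ ∈ [r]` and a chain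
`C_1 ⊆ ⋯ ⊆ C_r ⊆ [r]` with `|C_k| = k` and `v₀ ∈ C_k`, with copy indices. -/
abbrev GEdge (r : ℕ) (β : ℕ → ℕ) : Type :=
  {c : Fin r × (Fin r → Finset (Fin r)) //
      (∀ k : Fin r, (c.2 k).card = (k : ℕ) + 1) ∧
      (∀ k l : Fin r, k ≤ l → c.2 k ⊆ c.2 l) ∧
      (∀ k : Fin r, c.1 ∈ c.2 k)} ×
    (∀ k : Fin r, Fin (β ((k : ℕ) + 1)))

/-- The vertex of `U_k([r])` appearing in position `k` of an edge of `𝓖_α`. -/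
def GEdge.vert {r : ℕ} {β : ℕ → ℕ} (e : GEdge r β) (k : Fin r) : GVert r β :=
  ⟨k, ⟨⟨e.1.1.2 k, e.1.2.1 k⟩, e.2 k⟩⟩

/-- Homomorphism density of the `(r+1)`-partite `(r+1)`-graph `𝓖_α` in a function
`U : [0,1]^{r+1} → [0,1]` (curried as `U(x, z_1, …, z_r)`). -/
noncomputable def tGyp (r : ℕ) (β : ℕ → ℕ) (U : ℝ → (Fin r → ℝ) → ℝ) : ℝ :=
  ∫ x in unitBox (Fin r), ∫ z in unitBox (GVert r β),
    ∏ e : GEdge r β, U (x e.1.1.1) fun k => z (e.vert k)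

/-- The exponent `q_k = β_k / (β·(k-1)!·(r-k)!)`, where `β = β_1⋯β_r`. -/
noncomputable def qexp (r : ℕ) (β : ℕ → ℕ) (k : ℕ) : ℝ :=
  (β k : ℝ) /
    ((∏ i ∈ Finset.Icc 1 r, (β i : ℝ)) * (k - 1).factorial * (r - k).factorial)

/-- The function `W_α(x, z_1, …, z_r) = ∏_{k=1}^r W(x, z_k)^{q_k}` (real powers). -/
noncomputable def Walpha (r : ℕ) (β : ℕ → ℕ) (W : ℝ → ℝ → ℝ)
    (x : ℝ) (z : Fin r → ℝ) : ℝ :=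
  ∏ k : Fin r, W x (z k) ^ qexp r β ((k : ℕ) + 1)


/-- `ρ(x_F) = ∫_0^1 ∏_{i ∈ F} W(x_i, y) dy`. -/
noncomputable def rho {A : Type*} (W : ℝ → ℝ → ℝ) (x : A → ℝ) (F : Finset A) : ℝ :=
  ∫ y in Set.Icc (0 : ℝ) 1, ∏ i ∈ F, W (x i) y

/-- The `α`-weighted homomorphism density of the `(m,r)`-downset graph. -/
noncomputable def downsetDensity (m r : ℕ) (α : ℕ → ℕ) (W : ℝ → ℝ → ℝ) : ℝ :=
  ∫ x in unitBox (Fin m),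
    ∏ F ∈ Finset.univ.filter (fun F : Finset (Fin m) => 1 ≤ F.card ∧ F.card ≤ r),
      rho W x F ^ α F.card

/-!
Expanding `W_α`, the integrand of `t_{𝓖_α}(W_α)` becomes a product of factors
`W(x_i, z_v)^{q_k}` over the pairs (edge, level `k`), where `v ∈ U_k([r])` is the vertex of the
edge at level `k` and `i` its root. Rooted chains of `[r]` correspond to permutations `σ` of `[r]`
(root `σ 0`, level sets `σ {0, …, k}`), and permutations act transitively on the pairs (`k`-set,
element of it); so a fixed pair `(v, i)` with `i ∈ v` is reached by exactly
`(k-1)! (r-k)! ∏_{l ≠ k} β_l = 1 / q_k` pairs (edge, level), and none if `i ∉ v`. The integrand is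
thus `∏_v ∏_{i ∈ v} W(x_i, z_v)`, which integrates in `z` to `∏_v ρ(x_v) = ∏_F ρ(x_F)^{β_{|F|}}`.
-/

open Finset
open scoped Nat

theorem exists_perm_apply_eq_and_map_eq {α : Type*} [Fintype α] [DecidableEq α]
    {s s' : Finset α} (hcard : s.card = s'.card) {i i' : α} (hi : i ∈ s) (hi' : i' ∈ s') :
    ∃ π : Equiv.Perm α, π i = i' ∧ s.map π.toEmbedding = s' := by
  let e₀ : {x // x ∈ s} ≃ {x // x ∈ s'} := Fintype.equivOfCardEq (by simpa using hcard)
  let e := e₀.trans (Equiv.swap (e₀ ⟨i, hi⟩) ⟨i', hi'⟩)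
  have he : e ⟨i, hi⟩ = ⟨i', hi'⟩ := by simp [e]
  refine ⟨e.extendSubtype, by rw [e.extendSubtype_apply_of_mem i hi, he], ?_⟩
  refine eq_of_subset_of_card_le (fun y hy => ?_) (by simp [hcard])
  obtain ⟨x, hx, rfl⟩ := mem_map.1 hy
  exact e.extendSubtype_mem x hx

theorem card_eq_card_fiber_mul_of_transitive {α β : Type*} [Fintype α] [DecidableEq β]
    (f : α → β) (t : Finset β) (hf : ∀ a, f a ∈ t)
    (htrans : ∀ b ∈ t, ∀ b' ∈ t, ∃ (e : α ≃ α) (e' : β ≃ β),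
      (∀ a, f (e a) = e' (f a)) ∧ e' b = b')
    {b : β} (hb : b ∈ t) :
    Fintype.card α = #{a | f a = b} * #t := by
  rw [← card_univ, card_eq_sum_card_fiberwise fun a _ => hf a, mul_comm, ← smul_eq_mul,
    ← sum_const]
  refine sum_congr rfl fun b' hb' => ?_
  obtain ⟨e, e', hfe, rfl⟩ := htrans b hb b' hb'
  symm
  refine card_equiv e fun a => ?_
  simp only [mem_filter, mem_univ, true_and, hfe, e'.apply_eq_iff_eq]

/-- The chain part of an edge of `𝓖_α`: `GEdge r β` is by definition
`RootedChain r × ∀ k : Fin r, Fin (β (k + 1))`. Level `k : Fin r` is the paper's level `k + 1`. -/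
abbrev RootedChain (r : ℕ) : Type :=
  {c : Fin r × (Fin r → Finset (Fin r)) //
      (∀ k : Fin r, (c.2 k).card = (k : ℕ) + 1) ∧
      (∀ k l : Fin r, k ≤ l → c.2 k ⊆ c.2 l) ∧
      (∀ k : Fin r, c.1 ∈ c.2 k)}

namespace RootedChain

variable {r : ℕ}

def ofPerm [NeZero r] (σ : Equiv.Perm (Fin r)) : RootedChain r :=
  ⟨(σ 0, fun k => (Iic k).map σ.toEmbedding), fun k => by simp,
    fun _ _ hkl => map_subset_map.2 (Iic_subset_Iic.2 hkl), fun k => by simp⟩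

theorem ofPerm_injective [NeZero r] : Function.Injective (ofPerm (r := r)) := by
  intro σ τ h
  have hC (k : Fin r) : (Iic k).map σ.toEmbedding = (Iic k).map τ.toEmbedding :=
    congrFun (congrArg (fun c : RootedChain r => c.1.2) h) k
  ext1 k
  induction k using WellFoundedLT.induction with
  | _ k ih =>
    have hlk : τ.symm (σ k) ≤ k := by
      simpa [hC k] using mem_map_of_mem σ.toEmbedding (mem_Iic.2 (le_refl k))
    obtain ⟨l, hl⟩ := τ.surjective (σ k)
    rw [← hl, Equiv.symm_apply_apply] at hlk
    obtain hlk | rfl := hlk.lt_or_eq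
    · exact absurd (σ.injective (hl.symm.trans (ih l hlk).symm)) hlk.ne'
    · exact hl.symm

theorem ofPerm_surjective [NeZero r] : Function.Surjective (ofPerm (r := r)) := by
  obtain ⟨n, rfl⟩ := Nat.exists_eq_succ_of_ne_zero (NeZero.ne r)
  rintro ⟨⟨root, C⟩, hcard, hmono, hroot⟩
  let prev : Fin (n + 1) → Finset (Fin (n + 1)) := Fin.cases ∅ fun j => C j.castSucc
  have hprev_card (k : Fin (n + 1)) : (prev k).card = k :=
    k.cases (by simp [prev]) fun j => by simp [prev, hcard]
  have hprev_sub (k : Fin (n + 1)) : prev k ⊆ C k :=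
    k.cases (by simp [prev]) fun j => hmono _ _ (Fin.castSucc_le_succ j)
  have hsub_prev (l k : Fin (n + 1)) (hlk : l < k) : C l ⊆ prev k := by
    induction k using Fin.cases with
    | zero => exact absurd hlk (Fin.not_lt_zero l)
    | succ j => exact hmono _ _ (Fin.le_castSucc_iff.2 hlk)
  have hnew (k : Fin (n + 1)) : (C k \ prev k).Nonempty := by
    rw [← card_pos, card_sdiff_of_subset (hprev_sub k), hcard, hprev_card]
    omega
  choose σ hσ using hnew
  simp only [mem_sdiff] at hσ
  have hσ_inj : Function.Injective σ := by
    intro a b hab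
    by_contra hne
    rcases lt_or_gt_of_ne hne with h | h
    · exact (hσ b).2 (hab ▸ hsub_prev a b h (hσ a).1)
    · exact (hσ a).2 (hab ▸ hsub_prev b a h (hσ b).1)
  let π := Equiv.ofBijective σ hσ_inj.bijective_of_finite
  have hmap (k : Fin (n + 1)) : (Iic k).map π.toEmbedding = C k := by
    refine eq_of_subset_of_card_le (fun y hy => ?_) (by simp [hcard])
    obtain ⟨l, hl, rfl⟩ := mem_map.1 hy
    exact hmono l k (mem_Iic.1 hl) (hσ l).1
  have hroot0 : σ 0 = root :=
    card_le_one.1 (by simp [hcard]) _ (hσ 0).1 _ (hroot 0)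
  exact ⟨π, Subtype.ext (Prod.ext hroot0 (funext hmap))⟩

theorem card_eq [NeZero r] : Fintype.card (RootedChain r) = r ! := by
  rw [← Fintype.card_congr (Equiv.ofBijective _ ⟨ofPerm_injective, ofPerm_surjective⟩),
    Fintype.card_perm, Fintype.card_fin]

def levelRoot (k : Fin r) (c : RootedChain r) :
    {s : Finset (Fin r) // s.card = k + 1} × Fin r :=
  (⟨c.1.2 k, c.2.1 k⟩, c.1.1)

def permute (π : Equiv.Perm (Fin r)) : RootedChain r ≃ RootedChain r :=
  (π.prodCongr (Equiv.piCongrRight fun _ => π.finsetCongr)).subtypeEquiv fun c => by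
    simp [Equiv.finsetCongr_apply]

theorem card_levelRoot_fiber [NeZero r] (k : Fin r)
    (s : {s : Finset (Fin r) // s.card = k + 1}) (i : Fin r) :
    #{c | levelRoot k c = (s, i)} = if i ∈ s.1 then k ! * (r - (k + 1))! else 0 := by
  split_ifs with hi
  swap
  · refine card_eq_zero.2 (filter_eq_empty_iff.2 fun c _ hc => hi ?_)
    simp only [levelRoot, Prod.mk.injEq, Subtype.ext_iff] at hc
    exact hc.1 ▸ hc.2 ▸ c.2.2.2 k
  let t : Finset ({s : Finset (Fin r) // s.card = k + 1} × Fin r) := {p | p.2 ∈ p.1.1}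
  have hcount := card_eq_card_fiber_mul_of_transitive (levelRoot k) t
    (fun c => by simpa [t, levelRoot] using c.2.2.2 k) ?_ (b := (s, i)) (by simpa [t] using hi)
  · have ht : #t = r.choose (k + 1) * (k + 1) := by
      rw [card_filter, Fintype.sum_prod_type]
      simp_rw [sum_boole, filter_mem_eq_inter, univ_inter]
      rw [Fintype.sum_congr _ _ fun s => s.2, sum_const, card_univ, Fintype.card_finset_len,
        Fintype.card_fin, smul_eq_mul]
    have hk : k + 1 ≤ r := k.2
    rw [card_eq, ht, ← Nat.choose_mul_factorial_mul_factorial hk, Nat.factorial_succ] at hcount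
    have hpos : 0 < r.choose (k + 1) * (k + 1) := Nat.mul_pos (Nat.choose_pos hk) k.1.succ_pos
    refine Nat.eq_of_mul_eq_mul_right hpos ?_
    rw [← hcount]
    ring
  · rintro ⟨s, i⟩ hi ⟨s', i'⟩ hi'
    simp only [t, mem_filter, mem_univ, true_and] at hi hi'
    obtain ⟨π, hπi, hπs⟩ := exists_perm_apply_eq_and_map_eq (s.2.trans s'.2.symm) hi hi'
    refine ⟨permute π, (π.finsetCongr.subtypeEquiv fun s => by simp).prodCongr π,
      fun c => rfl, ?_⟩
    simp [hπi, hπs]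

end RootedChain

theorem prod_Icc_one_eq_prod_fin {M : Type*} [CommMonoid M] (r : ℕ) (f : ℕ → M) :
    ∏ i ∈ Icc 1 r, f i = ∏ l : Fin r, f (l + 1) := by
  rw [Fin.prod_univ_eq_prod_range (fun l => f (l + 1)), range_eq_Ico, prod_Ico_add' f]
  rfl

section Edges

variable {r : ℕ} {β : ℕ → ℕ}

def GEdge.vertRoot (k : Fin r) (e : GEdge r β) :
    ({s : Finset (Fin r) // s.card = k + 1} × Fin (β (k + 1))) × Fin r :=
  (((RootedChain.levelRoot k e.1).1, e.2 k), e.1.1.1)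

theorem GEdge.card_vertRoot_fiber [NeZero r] (k : Fin r)
    (v : {s : Finset (Fin r) // s.card = k + 1} × Fin (β (k + 1))) (i : Fin r) :
    Fintype.card {e : GEdge r β // vertRoot k e = (v, i)} =
      if i ∈ v.1.1 then k ! * (r - (k + 1))! * ∏ l ∈ univ.erase k, β (l + 1) else 0 := by
  have hsplit : {e : GEdge r β // vertRoot k e = (v, i)} ≃
      {c : RootedChain r // c.levelRoot k = (v.1, i)} ×
        {ι : ∀ l : Fin r, Fin (β (l + 1)) // ι k = v.2} :=
    (Equiv.subtypeEquivRight fun e => by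
      simp only [vertRoot, RootedChain.levelRoot, Prod.ext_iff]; tauto).trans
      Equiv.subtypeProdEquivProd
  have hcopies :
      #{ι : ∀ l : Fin r, Fin (β (l + 1)) | ι k = v.2} = ∏ l ∈ univ.erase k, β (l + 1) := by
    simpa using Fintype.card_filter_piFinset_eq_of_mem
      (fun l : Fin r => (univ : Finset (Fin (β (l + 1))))) k (mem_univ v.2)
  rw [Fintype.card_congr hsplit, Fintype.card_prod, Fintype.card_subtype, Fintype.card_subtype,
    RootedChain.card_levelRoot_fiber, hcopies, ite_mul, zero_mul]

theorem qexp_mul_eq_one (hβ : ∀ l : Fin r, β (l + 1) ≠ 0) (k : Fin r) :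
    qexp r β (k + 1) * ((k ! * (r - (k + 1))! * ∏ l ∈ univ.erase k, β (l + 1) : ℕ) : ℝ) = 1 := by
  have hprod : ∏ i ∈ Icc 1 r, (β i : ℝ) = β (k + 1) * ∏ l ∈ univ.erase k, (β (l + 1) : ℝ) := by
    rw [prod_Icc_one_eq_prod_fin r (fun i => (β i : ℝ))]
    exact (mul_prod_erase _ (fun l : Fin r => (β (l + 1) : ℝ)) (mem_univ k)).symm
  have hne : (β (k + 1) : ℝ) * ∏ l ∈ univ.erase k, (β (l + 1) : ℝ) ≠ 0 :=
    mul_ne_zero (by exact_mod_cast hβ k) (prod_ne_zero_iff.2 fun l _ => by exact_mod_cast hβ l)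
  rw [qexp, hprod, Nat.add_sub_cancel]
  push_cast
  field_simp
  exact div_self hne

theorem prod_edges_rpow_qexp_eq_prod_vert [NeZero r] (hβ : ∀ l : Fin r, β (l + 1) ≠ 0)
    (f : GVert r β → Fin r → ℝ) (hf : ∀ v i, 0 ≤ f v i) (k : Fin r) :
    ∏ e : GEdge r β, f (e.vert k) e.1.1.1 ^ qexp r β (k + 1) =
      ∏ v : {s : Finset (Fin r) // s.card = k + 1} × Fin (β (k + 1)), ∏ i ∈ v.1.1, f ⟨k, v⟩ i := by
  let g (p : ({s : Finset (Fin r) // s.card = k + 1} × Fin (β (k + 1))) × Fin r) : ℝ :=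
    f ⟨k, p.1⟩ p.2 ^ qexp r β (k + 1)
  calc ∏ e : GEdge r β, f (e.vert k) e.1.1.1 ^ qexp r β (k + 1)
    _ = ∏ e : GEdge r β, g (GEdge.vertRoot k e) := rfl
    _ = ∏ p, g p ^ Fintype.card {e : GEdge r β // GEdge.vertRoot k e = p} := by
      rw [← Fintype.prod_fiberwise' (GEdge.vertRoot k) g]
      simp only [prod_const, card_univ]
    _ = ∏ p : ({s : Finset (Fin r) // s.card = k + 1} × Fin (β (k + 1))) × Fin r,
          if p.2 ∈ p.1.1.1 then f ⟨k, p.1⟩ p.2 else 1 := by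
      refine Fintype.prod_congr _ _ fun ⟨v, i⟩ => ?_
      rw [GEdge.card_vertRoot_fiber]
      split_ifs
      · rw [← Real.rpow_natCast, ← Real.rpow_mul (hf _ _), qexp_mul_eq_one hβ, Real.rpow_one]
      · rw [pow_zero]
    _ = _ := by
      rw [Fintype.prod_prod_type]
      simp only [Fintype.prod_ite_mem]

theorem prod_Walpha_edges [NeZero r] (hβ : ∀ l : Fin r, β (l + 1) ≠ 0)
    (W : ℝ → ℝ → ℝ) (hW : ∀ a b, 0 ≤ W a b) (x : Fin r → ℝ) (z : GVert r β → ℝ) :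
    ∏ e : GEdge r β, Walpha r β W (x e.1.1.1) (fun k => z (e.vert k)) =
      ∏ v : GVert r β, ∏ i ∈ v.2.1.1, W (x i) (z v) := by
  simp only [Walpha]
  rw [prod_comm, Fintype.prod_sigma]
  exact Fintype.prod_congr _ _ fun k =>
    prod_edges_rpow_qexp_eq_prod_vert hβ (fun v i => W (x i) (z v)) (fun _ _ => hW _ _) k

theorem prod_gvert_eq_prod_pow {M : Type*} [CommMonoid M] (β : ℕ → ℕ)
    (g : Finset (Fin r) → M) :
    ∏ v : GVert r β, g v.2.1.1 =
      ∏ F ∈ univ.filter (fun F : Finset (Fin r) => 1 ≤ F.card ∧ F.card ≤ r), g F ^ β F.card := by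
  calc ∏ v : GVert r β, g v.2.1.1
    _ = ∏ v : (Σ k : Fin r, {s : Finset (Fin r) // s.card = k + 1}), g v.2 ^ β v.2.1.card := by
      simp only [Fintype.prod_sigma, Fintype.prod_prod_type, prod_const, card_univ,
        Fintype.card_fin]
      exact Fintype.prod_congr _ _ fun k => Fintype.prod_congr _ _ fun s => by rw [s.2]
    _ = _ := by
      refine prod_bij' (fun v _ => v.2.1) (fun F hF => ⟨⟨F.card - 1, ?_⟩, ⟨F, ?_⟩⟩)
        (fun v _ => ?_) (fun _ _ => mem_univ _) (fun v _ => ?_) (fun _ _ => rfl) (fun _ _ => rfl)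
      · have := (mem_filter.1 hF).2
        omega
      · have := (mem_filter.1 hF).2
        simp only
        omega
      · have := card_le_univ v.2.1
        simp only [mem_filter, mem_univ, true_and, v.2.2, Fintype.card_fin] at this ⊢
        omega
      · exact Sigma.subtype_ext (Fin.ext (by simp [v.2.2])) rfl

end Edges

theorem setIntegral_unitBox_prod_s11 {ι : Type*} [Fintype ι] (g : ι → ℝ → ℝ) :
    ∫ z in unitBox ι, ∏ v, g v (z v) = ∏ v, ∫ y in Set.Icc (0 : ℝ) 1, g v y := by
  rw [unitBox, volume_pi, Measure.restrict_pi_pi]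
  exact integral_fintype_prod_eq_prod g

theorem subgraph_density_eq_downset_general (r : ℕ) (hr : 1 ≤ r)
    (β : ℕ → ℕ) (hβ : ∀ k, 1 ≤ k → k ≤ r → 1 ≤ β k)
    (W : ℝ → ℝ → ℝ) (hWmem : ∀ x y, W x y ∈ Set.Icc (0 : ℝ) 1) :
    tGyp r β (Walpha r β W) = downsetDensity r r β W := by
  have : NeZero r := ⟨by omega⟩
  have hβ_ne (l : Fin r) : β (l + 1) ≠ 0 := Nat.one_le_iff_ne_zero.1 (hβ _ (by omega) l.2)
  unfold tGyp downsetDensity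
  congr 1 with x
  calc ∫ z in unitBox (GVert r β), ∏ e : GEdge r β, Walpha r β W (x e.1.1.1) (fun k => z (e.vert k))
    _ = ∫ z in unitBox (GVert r β), ∏ v : GVert r β, ∏ i ∈ v.2.1.1, W (x i) (z v) := by
      simp_rw [prod_Walpha_edges hβ_ne W (fun a b => (hWmem a b).1) x]
    _ = ∏ v : GVert r β, rho W x v.2.1.1 :=
      setIntegral_unitBox_prod_s11 fun (v : GVert r β) y => ∏ i ∈ v.2.1.1, W (x i) y
    _ = _ := prod_gvert_eq_prod_pow β (rho W x)

/-- `t_{𝓖_α}(W_α) = t_J^β(W)` for every graphon `W`, where `J` is the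
`(r,r)`-downset graph; here `α = (α_k)_{k=1}^r` is a symmetric integer weight vector
with `C(m-k,r-k) ∣ α_k` and `β_k = α_k / C(m-k,r-k) ≥ 1` for each `1 ≤ k ≤ r`. -/
theorem subgraph_density_eq_downset (m r : ℕ) (hr : 1 ≤ r) (hrm : r ≤ m)
    (α β : ℕ → ℕ) (hβ : ∀ k, 1 ≤ k → k ≤ r → 1 ≤ β k)
    (hαβ : ∀ k, 1 ≤ k → k ≤ r → α k = β k * (m - k).choose (r - k))
    (W : ℝ → ℝ → ℝ) (hWmeas : Measurable (Function.uncurry W))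
    (hWsymm : ∀ x y, W x y = W y x) (hWmem : ∀ x y, W x y ∈ Set.Icc (0 : ℝ) 1) :
    tGyp r β (Walpha r β W) = downsetDensity r r β W :=
  subgraph_density_eq_downset_general r hr β hβ W hWmem
end

section
/- Let 𝓗 be an r-partite r-uniform hypergraph with parts A_1, …, A_r. If 𝓗 is a reflection hypergraph and k, p are positive integers with 1 ≤ k ≤ r, then the blow-up 𝓗^p_{Ā_k} is also a reflection hypergraph. -/
/-- A presentation of an `r`-partite `r`-uniform hypergraph (with parts `A i` and edge
set `E ⊆ Π i, A i`) as a reflection hypergraph: a finite Coxeter system `(W, S)`,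
subsets `T i` of the simple reflections, part-respecting bijections between `A i` and
the left cosets of the subgroup generated by `T i`, under which the edges are exactly
the tuples `(w·W_1, …, w·W_r)` for `w ∈ W`. -/
structure ReflectionPresentation {r : ℕ} (A : Fin r → Type*) (E : Set (∀ i, A i)) where
  B : Type
  M : CoxeterMatrix B
  W : Type
  [instGroup : Group W]
  instFinite : Finite W
  cs : CoxeterSystem M W
  T : Fin r → Set B
  equiv : ∀ i, A i ≃ W ⧸ Subgroup.closure (cs.simple '' T i)
  edge_iff : ∀ e : ∀ i, A i,
    e ∈ E ↔ ∃ w : W, ∀ i, equiv i (e i) = QuotientGroup.mk w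

/-- An `r`-partite `r`-uniform hypergraph is a reflection hypergraph if it is
isomorphic, respecting parts, to a `(T_1, …, T_r; S, W)`-reflection hypergraph for some
finite Coxeter system `(W, S)` and subsets `T_1, …, T_r ⊆ S`. -/
def IsReflectionHypergraph {r : ℕ} (A : Fin r → Type*) (E : Set (∀ i, A i)) : Prop :=
  Nonempty (ReflectionPresentation A E)

/-!
The blow-up `𝓗^p_{Ā_k}` is the part-by-part product of `𝓗` with the hypergraph whose `k`-th part
has `p` vertices, whose other parts are single vertices, and whose edges are all tuples. Reflection
hypergraphs are closed under such products: take the direct product `W × W'` of the Coxeter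
groups, whose Coxeter diagram is the disjoint union of the two diagrams, with the subsets
`T_i ⊔ T'_i`; the parabolic subgroups are then products, and so are their coset spaces. In the
dihedral group of order `2p` (`p ≥ 2`) one simple reflection generates a subgroup of index `p`;
taking `T_k` to be that reflection and every other `T_i` to be all of `S` makes every tuple an edge
of the second factor. For `p = 1` any finite Coxeter system with all `T_i = S` does.
-/

namespace CoxeterMatrix

variable {B B' : Type*}

def sum (M : CoxeterMatrix B) (M' : CoxeterMatrix B') : CoxeterMatrix (B ⊕ B') where
  M := Matrix.fromBlocks M (Matrix.of fun _ _ => 2) (Matrix.of fun _ _ => 2) M'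
  isSymm := M.isSymm.fromBlocks rfl M'.isSymm
  diagonal := by rintro (i | i) <;> simp
  off_diagonal
    | .inl i, .inl j, h => M.off_diagonal i j (ne_of_apply_ne _ h)
    | .inl _, .inr _, _ => by simp
    | .inr _, .inl _, _ => by simp
    | .inr i, .inr j, h => M'.off_diagonal i j (ne_of_apply_ne _ h)

end CoxeterMatrix

namespace CoxeterSystem

variable {B B' : Type} {M : CoxeterMatrix B} {M' : CoxeterMatrix B'}
  {W W' : Type*} [Group W] [Group W'] (cs : CoxeterSystem M W) (cs' : CoxeterSystem M' W')

theorem commute_simple_of_eq_two {i j : B} (h : M i j = 2) :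
    Commute (cs.simple i) (cs.simple j) := by
  have hij := cs.simple_mul_simple_pow i j
  rwa [h, pow_two, ← eq_inv_iff_mul_eq_one, mul_inv_rev, cs.inv_simple, cs.inv_simple] at hij

theorem commute_of_commute_simple {G : Type*} [Group G] (f : W →* G) {g : G}
    (h : ∀ i, Commute (f (cs.simple i)) g) (w : W) : Commute (f w) g :=
  cs.simple_induction (p := fun w => Commute (f w) g) w h (by simp)
    fun u v hu hv => by simpa using hu.mul_left hv

theorem isLiftable_sum :
    (M.sum M').IsLiftable (Sum.elim (fun i => (cs.simple i, 1)) (fun i => (1, cs'.simple i))) := by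
  rintro (i | i) (j | j) <;> simp [CoxeterMatrix.sum, Prod.pow_mk]

noncomputable def sumToProd : (M.sum M').Group →* W × W' :=
  (M.sum M').toCoxeterSystem.lift ⟨_, isLiftable_sum cs cs'⟩

theorem sumToProd_simple (i : B ⊕ B') :
    sumToProd cs cs' ((M.sum M').simple i) =
      Sum.elim (fun i => (cs.simple i, 1)) (fun i => (1, cs'.simple i)) i :=
  (M.sum M').toCoxeterSystem.lift_apply_simple (isLiftable_sum cs cs') i

variable (M') in
noncomputable def inlSum : W →* (M.sum M').Group :=
  cs.lift ⟨_, fun i j => (M.sum M').toCoxeterSystem.simple_mul_simple_pow (.inl i) (.inl j)⟩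

variable (M) in
noncomputable def inrSum : W' →* (M.sum M').Group :=
  cs'.lift ⟨_, fun i j => (M.sum M').toCoxeterSystem.simple_mul_simple_pow (.inr i) (.inr j)⟩

@[simp] theorem inlSum_simple (i : B) : cs.inlSum M' (cs.simple i) = (M.sum M').simple (.inl i) :=
  cs.lift_apply_simple _ i

@[simp] theorem inrSum_simple (i : B') :
    cs'.inrSum M (cs'.simple i) = (M.sum M').simple (.inr i) :=
  cs'.lift_apply_simple _ i

theorem commute_inlSum_inrSum (w : W) (w' : W') : Commute (cs.inlSum M' w) (cs'.inrSum M w') :=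
  cs.commute_of_commute_simple _ (fun i => (cs'.commute_of_commute_simple _ (fun j => by
    simpa using ((M.sum M').toCoxeterSystem.commute_simple_of_eq_two rfl).symm) w').symm) w

noncomputable def prodToSum : W × W' →* (M.sum M').Group :=
  (cs.inlSum M').noncommCoprod (cs'.inrSum M) (commute_inlSum_inrSum cs cs')

theorem sumToProd_comp_prodToSum : (sumToProd cs cs').comp (prodToSum cs cs') = .id _ := by
  have hl : (sumToProd cs cs').comp (cs.inlSum M') = .inl W W' :=
    cs.ext_simple fun i => by simp [sumToProd_simple]
  have hr : (sumToProd cs cs').comp (cs'.inrSum M) = .inr W W' :=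
    cs'.ext_simple fun i => by simp [sumToProd_simple]
  ext ⟨w, w'⟩ <;> simp [prodToSum, ← MonoidHom.comp_apply, hl, hr]

theorem prodToSum_comp_sumToProd : (prodToSum cs cs').comp (sumToProd cs cs') = .id _ :=
  (M.sum M').toCoxeterSystem.ext_simple fun
    | .inl i => by simp [sumToProd_simple, prodToSum]
    | .inr i => by simp [sumToProd_simple, prodToSum]

protected noncomputable def prod : CoxeterSystem (M.sum M') (W × W') :=
  (M.sum M').toCoxeterSystem.map <| (sumToProd cs cs').toMulEquiv (prodToSum cs cs')
    (prodToSum_comp_sumToProd cs cs') (sumToProd_comp_prodToSum cs cs')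

@[simp] theorem prod_simple_inl (i : B) : (cs.prod cs').simple (.inl i) = (cs.simple i, 1) :=
  sumToProd_simple cs cs' (.inl i)

@[simp] theorem prod_simple_inr (i : B') : (cs.prod cs').simple (.inr i) = (1, cs'.simple i) :=
  sumToProd_simple cs cs' (.inr i)

end CoxeterSystem

section PowVal

variable {G : Type*} [Group G] {n : ℕ} [NeZero n] {a x : G}

theorem pow_val_add_of_pow_eq_one (hx : x ^ n = 1) (i j : ZMod n) :
    x ^ (i + j).val = x ^ i.val * x ^ j.val := by
  rw [ZMod.val_add, ← pow_eq_pow_mod _ hx, pow_add]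

theorem pow_val_neg_of_pow_eq_one (hx : x ^ n = 1) (i : ZMod n) :
    x ^ (-i).val = (x ^ i.val)⁻¹ := by
  refine eq_inv_of_mul_eq_one_left ?_
  rw [← pow_val_add_of_pow_eq_one hx, neg_add_cancel, ZMod.val_zero, pow_zero]

theorem mul_pow_val_eq_pow_val_neg_mul (ha : a * a = 1) (hx : x ^ n = 1) (hax : a * x * a = x⁻¹)
    (i : ZMod n) : a * x ^ i.val = x ^ (-i).val * a := by
  have hconj := conj_pow (a := a) (b := x) (i := i.val)
  rw [inv_eq_of_mul_eq_one_right ha, hax, inv_pow] at hconj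
  rw [pow_val_neg_of_pow_eq_one hx, hconj, mul_assoc, ha, mul_one]

end PowVal

namespace DihedralGroup

theorem index_zpowers_sr (n : ℕ) : (Subgroup.zpowers (sr 0 : DihedralGroup n)).index = n := by
  have h := (Subgroup.zpowers (sr 0 : DihedralGroup n)).index_mul_card
  rw [Nat.card_zpowers, orderOf_sr, nat_card] at h
  omega

def lift {G : Type*} [Group G] {n : ℕ} [NeZero n] (a x : G) (ha : a * a = 1) (hx : x ^ n = 1)
    (hax : a * x * a = x⁻¹) : DihedralGroup n →* G where
  toFun
    | r i => x ^ i.val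
    | sr i => a * x ^ i.val
  map_one' := by rw [one_def]; simp
  map_mul' := by
    have hxa := mul_pow_val_eq_pow_val_neg_mul ha hx hax
    rintro (i | i) (j | j) <;>
      simp only [r_mul_r, r_mul_sr, sr_mul_r, sr_mul_sr, sub_eq_neg_add,
        pow_val_add_of_pow_eq_one hx]
    · rw [← mul_assoc, hxa, neg_neg, mul_assoc]
    · rw [mul_assoc]
    · rw [hxa, mul_assoc, ← mul_assoc a a, ha, one_mul]

section CoxeterSystem

variable (m : ℕ)

theorem isLiftable_sr :
    (CoxeterMatrix.I m).IsLiftable fun i : Fin 2 => (sr (i : ℕ) : DihedralGroup (m + 2)) := by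
  intro i j
  fin_cases i <;> fin_cases j <;> simp [CoxeterMatrix.I, sr_mul_sr]

noncomputable def ofCoxeterGroup : (CoxeterMatrix.I m).Group →* DihedralGroup (m + 2) :=
  (CoxeterMatrix.I m).toCoxeterSystem.lift ⟨_, isLiftable_sr m⟩

theorem ofCoxeterGroup_simple (i : Fin 2) :
    ofCoxeterGroup m ((CoxeterMatrix.I m).simple i) = sr (i : ℕ) :=
  (CoxeterMatrix.I m).toCoxeterSystem.lift_apply_simple (isLiftable_sr m) i

noncomputable def toCoxeterGroup : DihedralGroup (m + 2) →* (CoxeterMatrix.I m).Group :=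
  let cs := (CoxeterMatrix.I m).toCoxeterSystem
  lift (cs.simple 0) (cs.simple 0 * cs.simple 1) (cs.simple_mul_simple_self 0)
    (by simpa [CoxeterMatrix.I] using cs.simple_mul_simple_pow 0 1)
    (by rw [cs.simple_mul_simple_cancel_left, mul_inv_rev, cs.inv_simple, cs.inv_simple])

theorem ofCoxeterGroup_comp_toCoxeterGroup :
    (ofCoxeterGroup m).comp (toCoxeterGroup m) = .id _ := by
  have hx : ofCoxeterGroup m ((CoxeterMatrix.I m).simple 0 * (CoxeterMatrix.I m).simple 1) =
      r 1 := by
    simp [ofCoxeterGroup_simple, sr_mul_sr]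
  ext (i | i) <;> simp [toCoxeterGroup, lift, map_pow, hx, ofCoxeterGroup_simple]

theorem toCoxeterGroup_comp_ofCoxeterGroup :
    (toCoxeterGroup m).comp (ofCoxeterGroup m) = .id _ := by
  refine (CoxeterMatrix.I m).toCoxeterSystem.ext_simple fun i => ?_
  fin_cases i
  · simp [ofCoxeterGroup_simple, toCoxeterGroup, lift]
  · simp [ofCoxeterGroup_simple, toCoxeterGroup, lift, ZMod.val_one'' (n := m + 2) (by omega)]
    exact (CoxeterMatrix.I m).toCoxeterSystem.simple_mul_simple_cancel_left 0

noncomputable def coxeterSystem : CoxeterSystem (CoxeterMatrix.I m) (DihedralGroup (m + 2)) :=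
  (CoxeterMatrix.I m).toCoxeterSystem.map <|
    (ofCoxeterGroup m).toMulEquiv (toCoxeterGroup m) (toCoxeterGroup_comp_ofCoxeterGroup m)
      (ofCoxeterGroup_comp_toCoxeterGroup m)

@[simp] theorem coxeterSystem_simple (i : Fin 2) : (coxeterSystem m).simple i = sr (i : ℕ) :=
  ofCoxeterGroup_simple m i

end CoxeterSystem

end DihedralGroup

theorem Subgroup.closure_inl_image_union_inr_image {G H : Type*} [Group G] [Group H]
    (s : Set G) (t : Set H) :
    closure (MonoidHom.inl G H '' s ∪ MonoidHom.inr G H '' t) = (closure s).prod (closure t) :=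
  le_antisymm
    (closure_le _ |>.2 <| Set.union_subset
      (Set.image_subset_iff.2 fun _ hg => ⟨subset_closure hg, one_mem _⟩)
      (Set.image_subset_iff.2 fun _ hh => ⟨one_mem _, subset_closure hh⟩))
    (prod_le_iff.2 ⟨by rw [MonoidHom.map_closure]; exact closure_mono Set.subset_union_left,
      by rw [MonoidHom.map_closure]; exact closure_mono Set.subset_union_right⟩)

namespace ReflectionPresentation

variable {r : ℕ} {A A' : Fin r → Type*} {E : Set (∀ i, A i)} {E' : Set (∀ i, A' i)}
  (P : ReflectionPresentation A E) (P' : ReflectionPresentation A' E')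

attribute [instance] instGroup instFinite

theorem closure_prod_simple_image (i : Fin r) :
    Subgroup.closure ((P.cs.prod P'.cs).simple '' (Sum.inl '' P.T i ∪ Sum.inr '' P'.T i)) =
      (Subgroup.closure (P.cs.simple '' P.T i)).prod
        (Subgroup.closure (P'.cs.simple '' P'.T i)) := by
  rw [← Subgroup.closure_inl_image_union_inr_image]
  simp [Set.image_union, Set.image_image]

noncomputable def prod : ReflectionPresentation (fun i => A i × A' i)
    {e | (fun i => (e i).1) ∈ E ∧ (fun i => (e i).2) ∈ E'} where
  B := P.B ⊕ P'.B
  M := P.M.sum P'.M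
  W := P.W × P'.W
  instFinite := inferInstance
  cs := P.cs.prod P'.cs
  T i := Sum.inl '' P.T i ∪ Sum.inr '' P'.T i
  equiv i := (((Subgroup.quotientEquivOfEq (closure_prod_simple_image P P' i)).trans
    (QuotientGroup.prodEquiv _ _)).trans ((P.equiv i).prodCongr (P'.equiv i)).symm).symm
  edge_iff e := by
    simp only [Set.mem_ofPred_eq, P.edge_iff, P'.edge_iff, Prod.exists, Equiv.symm_apply_eq]
    simp [Subgroup.quotientEquivOfEq_mk, Prod.ext_iff, Equiv.eq_symm_apply, forall_and,
      exists_and_left, exists_and_right]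

end ReflectionPresentation

theorem IsReflectionHypergraph.prod {r : ℕ} {A A' : Fin r → Type*} {E : Set (∀ i, A i)}
    {E' : Set (∀ i, A' i)} (h : IsReflectionHypergraph A E) (h' : IsReflectionHypergraph A' E') :
    IsReflectionHypergraph (fun i => A i × A' i)
      {e | (fun i => (e i).1) ∈ E ∧ (fun i => (e i).2) ∈ E'} :=
  let ⟨P⟩ := h
  let ⟨P'⟩ := h'
  ⟨P.prod P'⟩

theorem isReflectionHypergraph_univ_of_index {r : ℕ} {B W : Type} {M : CoxeterMatrix B} [Group W]
    [Finite W] (cs : CoxeterSystem M W) (k : Fin r) {t : Set B} {p : ℕ}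
    (ht : (Subgroup.closure (cs.simple '' t)).index = p) :
    IsReflectionHypergraph (fun i => Fin (if i = k then p else 1)) Set.univ := by
  let T i := if i = k then t else Set.univ
  have hindex i : (Subgroup.closure (cs.simple '' T i)).index = if i = k then p else 1 := by
    by_cases hi : i = k
    · simpa [T, hi] using ht
    · simp [T, hi, cs.subgroup_closure_range_simple]
  let equiv i := (Finite.equivFinOfCardEq (hindex i)).symm
  refine ⟨⟨B, M, W, ‹_›, cs, T, equiv, fun e => iff_of_true trivial ?_⟩⟩
  obtain ⟨w, hw⟩ := QuotientGroup.mk_surjective (equiv k (e k))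
  refine ⟨w, fun i => ?_⟩
  by_cases hi : i = k
  · subst hi
    exact hw.symm
  · have := (Nat.card_eq_one_iff_unique.mp ((hindex i).trans (if_neg hi))).1
    exact Subsingleton.elim _ _

theorem isReflectionHypergraph_fin_univ {r : ℕ} (k : Fin r) {p : ℕ} (hp : 0 < p) :
    IsReflectionHypergraph (fun i => Fin (if i = k then p else 1)) Set.univ := by
  rcases p with _ | _ | m
  · exact absurd hp (lt_irrefl 0)
  · refine isReflectionHypergraph_univ_of_index (DihedralGroup.coxeterSystem 0) k (t := Set.univ) ?_
    rw [Set.image_univ, CoxeterSystem.subgroup_closure_range_simple, Subgroup.index_top]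
  · refine isReflectionHypergraph_univ_of_index (DihedralGroup.coxeterSystem m) k (t := {0}) ?_
    simp [← Subgroup.zpowers_eq_closure, DihedralGroup.index_zpowers_sr]

/-- if an `r`-partite `r`-uniform hypergraph with parts `A_1, …, A_r` is
a reflection hypergraph and `1 ≤ k ≤ r`, `p ≥ 1`, then the blow-up `𝓗^p_{Ā_k}` (each
vertex of `A_k` replaced by `p` copies, and each edge through `v ∈ A_k` replicated for
each copy of `v`) is also a reflection hypergraph. -/
theorem isReflectionHypergraph_blowUp {r : ℕ} (A : Fin r → Type*)
    (E : Set (∀ i, A i)) (k : Fin r) (p : ℕ) (hp : 0 < p)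
    (h : IsReflectionHypergraph A E) :
    IsReflectionHypergraph (fun i => A i × Fin (if i = k then p else 1))
      {e' | (fun i => (e' i).1) ∈ E} := by
  simpa using h.prod (isReflectionHypergraph_fin_univ k hp)
end
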